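/- arXiv:2311.15467 — 2 statements merged into one kernel-verified Lean document; each statement's English description precedes it below -/
import Mathlib

section
/- Let S be an LNE subset of a metric space M with LNE constant implied by a Lipschitz identity, and let F : S → P be a K-Lipschitz map to a metric space P. Then the graph G_F = {(s, F(s)) : s ∈ S}, as a subset of M × P equipped with the sum distance d_M + d_P, is LNE. -/
/-!
The graph map `x ↦ (x, F x)` is `(1 + K)`-Lipschitz on `S` for the sum distance, and the first
projection is a `1`-Lipschitz inverse of it on the graph. Pushing a path of `S` forward along the
graph map multiplies its length by at most `1 + K`, so the graph is LNE with constant `(1 + K) L`.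
-/

open Set Metric

/-- Length of a path `γ` parametrized by `[0,1]`, as the total variation on `[0,1]`. -/
noncomputable def pathLength {M : Type*} [PseudoEMetricSpace M] (γ : ℝ → M) : ENNReal :=
  eVariationOn γ (Set.Icc 0 1)

/-- Inner distance in a subset `S`: infimum of lengths of continuous paths in `S`
joining `x` and `y` (it is `∞` if there is no such path). -/
noncomputable def innerDist {M : Type*} [PseudoEMetricSpace M] (S : Set M) (x y : M) : ENNReal :=
  sInf {l : ENNReal | ∃ γ : ℝ → M, ContinuousOn γ (Set.Icc 0 1) ∧
    Set.MapsTo γ (Set.Icc 0 1) S ∧ γ 0 = x ∧ γ 1 = y ∧ l = pathLength γ}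

/-- `S` is Lipschitz normally embedded with constant `L`. -/
def IsLNEWith {M : Type*} [PseudoMetricSpace M] (L : ℝ) (S : Set M) : Prop :=
  ∀ ⦃x⦄, x ∈ S → ∀ ⦃y⦄, y ∈ S → innerDist S x y ≤ ENNReal.ofReal (L * dist x y)

/-- `S` is Lipschitz normally embedded. -/
def IsLNE {M : Type*} [PseudoMetricSpace M] (S : Set M) : Prop :=
  ∃ L : ℝ, 1 ≤ L ∧ IsLNEWith L S

open scoped NNReal

theorem innerDist_le_pathLength {M : Type*} [PseudoEMetricSpace M] {S : Set M} {γ : ℝ → M}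
    (hγ : ContinuousOn γ (Icc 0 1)) (hγS : MapsTo γ (Icc 0 1) S) :
    innerDist S (γ 0) (γ 1) ≤ pathLength γ :=
  sInf_le ⟨γ, hγ, hγS, rfl, rfl, rfl⟩

theorem innerDist_le_mul_of_lipschitzOnWith {M N : Type*} [PseudoEMetricSpace M]
    [PseudoEMetricSpace N] {S : Set M} {T : Set N} {Φ : M → N} {C : ℝ≥0} (hC : C ≠ 0)
    (hΦ : LipschitzOnWith C Φ S) (hΦST : MapsTo Φ S T) (x y : M) :
    innerDist T (Φ x) (Φ y) ≤ C * innerDist S x y := by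
  conv_rhs => rw [innerDist, sInf_eq_iInf', ENNReal.mul_iInf_of_ne (by simpa) ENNReal.coe_ne_top]
  refine le_iInf fun ⟨_, γ, hγ, hγS, hγ0, hγ1, hl⟩ => ?_
  subst hγ0 hγ1 hl
  calc innerDist T (Φ (γ 0)) (Φ (γ 1))
      ≤ pathLength (Φ ∘ γ) :=
        innerDist_le_pathLength (hΦ.continuousOn.comp hγ hγS) (hΦST.comp hγS)
    _ ≤ C * pathLength γ := hΦ.comp_eVariationOn_le hγS

theorem IsLNEWith.of_lipschitz_retraction {M N : Type*} [PseudoMetricSpace M] [PseudoMetricSpace N]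
    {L : ℝ} {S : Set M} {T : Set N} (hS : IsLNEWith L S) (hL : 0 ≤ L) {Φ : M → N} {ψ : N → M}
    {C D : ℝ≥0} (hC : C ≠ 0) (hΦ : LipschitzOnWith C Φ S) (hΦST : MapsTo Φ S T)
    (hψ : LipschitzOnWith D ψ T) (hψTS : MapsTo ψ T S) (hΦψ : ∀ X ∈ T, Φ (ψ X) = X) :
    IsLNEWith (C * L * D) T := by
  intro X hX Y hY
  calc innerDist T X Y = innerDist T (Φ (ψ X)) (Φ (ψ Y)) := by rw [hΦψ X hX, hΦψ Y hY]
    _ ≤ C * innerDist S (ψ X) (ψ Y) := innerDist_le_mul_of_lipschitzOnWith hC hΦ hΦST _ _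
    _ ≤ C * ENNReal.ofReal (L * dist (ψ X) (ψ Y)) := by gcongr; exact hS (hψTS hX) (hψTS hY)
    _ = ENNReal.ofReal (C * (L * dist (ψ X) (ψ Y))) := by
      rw [ENNReal.ofReal_mul C.coe_nonneg, ENNReal.ofReal_coe_nnreal]
    _ ≤ ENNReal.ofReal (C * (L * (D * dist X Y))) := by
      gcongr; exact hψ.dist_le_mul X hX Y hY
    _ = ENNReal.ofReal (C * L * D * dist X Y) := by ring_nf

theorem LipschitzOnWith.graph_toLp_one {M P : Type*} [PseudoEMetricSpace M] [PseudoEMetricSpace P]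
    {F : M → P} {K : ℝ≥0} {S : Set M} (hF : LipschitzOnWith K F S) :
    LipschitzOnWith (1 + K) (fun x => WithLp.toLp 1 (x, F x)) S := by
  intro x hx y hy
  calc edist (WithLp.toLp 1 (x, F x)) (WithLp.toLp 1 (y, F y))
      = edist x y + edist (F x) (F y) := by
        rw [WithLp.prod_edist_eq_add (by norm_num)]; simp
    _ ≤ edist x y + K * edist x y := by gcongr; exact hF hx hy
    _ = (1 + K) * edist x y := by ring

theorem graph_of_lipschitz_isLNE_general {M P : Type*} [MetricSpace M] [MetricSpace P]
    (S : Set M) (hS : IsLNE S) (F : M → P) (K : ℝ)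
    (hF : ∀ x ∈ S, ∀ y ∈ S, dist (F x) (F y) ≤ K * dist x y) :
    IsLNE {q : WithLp 1 (M × P) |
      (WithLp.equiv 1 (M × P) q).1 ∈ S ∧
      (WithLp.equiv 1 (M × P) q).2 = F (WithLp.equiv 1 (M × P) q).1} := by
  obtain ⟨L, hL1, hL⟩ := hS
  refine ⟨(1 + K.toNNReal) * L * 1, by nlinarith [K.toNNReal.coe_nonneg],
    hL.of_lipschitz_retraction (by linarith) (by positivity)
      (LipschitzOnWith.of_dist_le' hF).graph_toLp_one (fun x hx => by simpa using hx)
      (LipschitzWith.of_edist_le WithLp.edist_fst_le).lipschitzOnWith (fun X hX => hX.1) ?_⟩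
  rintro X ⟨-, hX⟩
  apply (WithLp.equiv 1 (M × P)).injective
  ext <;> simp_all

/-- the graph of a Lipschitz map over an LNE set is LNE in the product
with the sum distance (the `L¹` product metric). -/
theorem graph_of_lipschitz_isLNE {M P : Type*} [MetricSpace M] [MetricSpace P]
    (S : Set M) (hS : IsLNE S) (F : M → P) (K : ℝ) (hK : 0 ≤ K)
    (hF : ∀ x ∈ S, ∀ y ∈ S, dist (F x) (F y) ≤ K * dist x y) :
    IsLNE {q : WithLp 1 (M × P) |
      (WithLp.equiv 1 (M × P) q).1 ∈ S ∧
      (WithLp.equiv 1 (M × P) q).2 = F (WithLp.equiv 1 (M × P) q).1} :=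
  graph_of_lipschitz_isLNE_general S hS F K hF
end

section
/- Let E be a connected closed subset of ℝ^n whose boundary components B₁,…,B_s are pairwise at positive distance δ > 0 apart, each being LNE with common constant A ≥ 1, and such that for any two points x, x' of E, the segment [x,x'] decomposes as in the pancake argument: it alternates between subsegments joining two points of a single B_i and open subsegments lying in E. Then d_inn^E(x,x') ≤ A·|x − x'| for all x, x' ∈ E; that is, E is LNE with constant A. -/
/-!
Follow the segment from `x` to `x'`. Each subsegment joining two points of one `B i` is
replaced by a path in `B i ⊆ E` of length at most `A` times its length (`B i` is LNE); each
gap between them lies in `E` and is kept, at cost its length `≤ A` times its length. Since the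
pieces are consecutive subsegments of `[x, x']`, their lengths add up to `|x - x'|`.
-/

open Set Metric

open AffineMap
open scoped ENNReal NNReal

section InnerDist

variable {M : Type*} [PseudoEMetricSpace M] {S T : Set M} {x y z : M}

lemma innerDist_le_pathLength_s16 {γ : ℝ → M} (hc : ContinuousOn γ (Icc 0 1))
    (hm : MapsTo γ (Icc 0 1) S) (h0 : γ 0 = x) (h1 : γ 1 = y) :
    innerDist S x y ≤ pathLength γ :=
  sInf_le ⟨γ, hc, hm, h0, h1, rfl⟩

lemma exists_pathLength_lt_of_innerDist_lt {c : ℝ≥0∞} (h : innerDist S x y < c) :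
    ∃ γ : ℝ → M, ContinuousOn γ (Icc 0 1) ∧ MapsTo γ (Icc 0 1) S ∧
      γ 0 = x ∧ γ 1 = y ∧ pathLength γ < c := by
  obtain ⟨_, ⟨γ, hc, hm, h0, h1, rfl⟩, hlt⟩ := sInf_lt_iff.mp h
  exact ⟨γ, hc, hm, h0, h1, hlt⟩

lemma innerDist_anti (h : S ⊆ T) (x y : M) : innerDist T x y ≤ innerDist S x y := by
  apply sInf_le_sInf
  rintro _ ⟨γ, hc, hm, h0, h1, rfl⟩
  exact ⟨γ, hc, hm.mono_right h, h0, h1, rfl⟩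

lemma IsLNEWith.innerDist_le_of_subset {M : Type*} [PseudoMetricSpace M] {L : ℝ} {B S : Set M}
    (hB : IsLNEWith L B) (hBS : B ⊆ S) {x y : M} (hx : x ∈ B) (hy : y ∈ B) :
    innerDist S x y ≤ ENNReal.ofReal (L * dist x y) :=
  (innerDist_anti hBS x y).trans (hB hx hy)

lemma innerDist_le_eVariationOn {γ : ℝ → M} {a b : ℝ} (hab : a ≤ b)
    (hc : ContinuousOn γ (Icc a b)) (hm : MapsTo γ (Icc a b) S) :
    innerDist S (γ a) (γ b) ≤ eVariationOn γ (Icc a b) := by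
  have himg : lineMap a b '' Icc (0 : ℝ) 1 = Icc a b := by
    rw [← segment_eq_image_lineMap, segment_eq_Icc hab]
  have hmaps : MapsTo (lineMap a b) (Icc (0 : ℝ) 1) (Icc a b) := himg ▸ mapsTo_image _ _
  calc innerDist S (γ a) (γ b) ≤ pathLength (γ ∘ lineMap a b) :=
        innerDist_le_pathLength_s16 (hc.comp lineMap_continuous.continuousOn hmaps) (hm.comp hmaps)
          (by simp) (by simp)
    _ = eVariationOn γ (Icc a b) := by
        rw [pathLength,
          eVariationOn.comp_eq_of_monotoneOn _ _ ((lineMap_mono hab).monotoneOn _), himg]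

lemma innerDist_le_pathLength_add {γ₁ γ₂ : ℝ → M} (hc₁ : ContinuousOn γ₁ (Icc 0 1))
    (hc₂ : ContinuousOn γ₂ (Icc 0 1)) (hm₁ : MapsTo γ₁ (Icc 0 1) S)
    (hm₂ : MapsTo γ₂ (Icc 0 1) S) (h0 : γ₁ 0 = x) (hjoin : γ₁ 1 = γ₂ 0) (h1 : γ₂ 1 = z) :
    innerDist S x z ≤ pathLength γ₁ + pathLength γ₂ := by
  set γ : ℝ → M := fun t => if t ≤ 1 then γ₁ t else γ₂ (t - 1)
  have eq₁ : EqOn γ γ₁ (Icc 0 1) := fun t ht => if_pos ht.2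
  have eq₂ : EqOn γ (γ₂ ∘ (· - 1)) (Icc 1 2) := by
    intro t ht
    rcases ht.1.eq_or_lt with rfl | ht₁
    · simp [γ, hjoin]
    · simp [γ, not_le.2 ht₁]
  have himg : (· - 1) '' Icc (1 : ℝ) 2 = Icc 0 1 := by norm_num [image_sub_const_Icc]
  have hmaps : MapsTo (· - 1) (Icc (1 : ℝ) 2) (Icc 0 1) := himg ▸ mapsTo_image _ _
  have hsplit : Icc (0 : ℝ) 1 ∪ Icc 1 2 = Icc 0 2 := Icc_union_Icc_eq_Icc zero_le_one one_le_two
  have hc : ContinuousOn γ (Icc 0 2) := hsplit ▸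
    (hc₁.congr eq₁).union_of_isClosed ((hc₂.comp (by fun_prop) hmaps).congr eq₂)
      isClosed_Icc isClosed_Icc
  have hm : MapsTo γ (Icc 0 2) S :=
    hsplit ▸ (hm₁.congr eq₁.symm).union ((hm₂.comp hmaps).congr eq₂.symm)
  have hlen : eVariationOn γ (Icc 0 2) = pathLength γ₁ + pathLength γ₂ := by
    have := eVariationOn.Icc_add_Icc γ zero_le_one one_le_two (mem_univ (1 : ℝ))
    simp only [univ_inter] at this
    rw [← this, eVariationOn.eq_of_eqOn eq₁, eVariationOn.eq_of_eqOn eq₂,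
      eVariationOn.comp_eq_of_monotoneOn _ _ (fun _ _ _ _ h => sub_le_sub_right h 1), himg]
    rfl
  calc innerDist S x z = innerDist S (γ 0) (γ 2) := by norm_num [γ, h0, h1]
    _ ≤ eVariationOn γ (Icc 0 2) := innerDist_le_eVariationOn zero_le_two hc hm
    _ = pathLength γ₁ + pathLength γ₂ := hlen

lemma innerDist_triangle (S : Set M) (x y z : M) :
    innerDist S x z ≤ innerDist S x y + innerDist S y z := by
  refine ENNReal.le_of_forall_pos_le_add fun ε hε hlt => ?_
  have hε2 : (ε / 2 : ℝ≥0∞) ≠ 0 := by simpa using hε.ne'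
  obtain ⟨γ₁, hc₁, hm₁, h0₁, h1₁, hl₁⟩ := exists_pathLength_lt_of_innerDist_lt
    (ENNReal.lt_add_right (lt_of_le_of_lt le_self_add hlt).ne hε2)
  obtain ⟨γ₂, hc₂, hm₂, h0₂, h1₂, hl₂⟩ := exists_pathLength_lt_of_innerDist_lt
    (ENNReal.lt_add_right (lt_of_le_of_lt le_add_self hlt).ne hε2)
  calc innerDist S x z ≤ pathLength γ₁ + pathLength γ₂ :=
        innerDist_le_pathLength_add hc₁ hc₂ hm₁ hm₂ h0₁ (h1₁.trans h0₂.symm) h1₂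
    _ ≤ (innerDist S x y + ε / 2) + (innerDist S y z + ε / 2) := add_le_add hl₁.le hl₂.le
    _ = innerDist S x y + innerDist S y z + ε := by rw [add_add_add_comm, ENNReal.add_halves]

end InnerDist

section Segment

variable {E : Type*} [SeminormedAddCommGroup E] [NormedSpace ℝ E] {S : Set E} {x y z : E}

lemma innerDist_le_dist_of_segment_subset (h : segment ℝ x y ⊆ S) :
    innerDist S x y ≤ ENNReal.ofReal (dist x y) := by
  have hlip : LipschitzWith (nndist x y) (lineMap x y : ℝ → E) := lipschitzWith_lineMap x y
  calc innerDist S x y ≤ pathLength (lineMap x y : ℝ → E) :=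
        innerDist_le_pathLength_s16 hlip.continuous.continuousOn
          (fun t ht => h (lineMap_mem_segment ℝ x y ht)) (by simp) (by simp)
    _ ≤ nndist x y * eVariationOn id (Icc (0 : ℝ) 1) :=
        (hlip.lipschitzOnWith (s := univ)).comp_eVariationOn_le (mapsTo_univ _ _)
    _ = ENNReal.ofReal (dist x y) := by
        have := (monotone_id.monotoneOn univ).eVariationOn_eq (mem_univ (0 : ℝ)) (mem_univ 1)
        rw [univ_inter] at this
        norm_num [this, ← ENNReal.ofReal_coe_nnreal]

lemma innerDist_le_mul_dist_of_mem_segment {A : ℝ} (hA : 0 ≤ A) (hy : y ∈ segment ℝ x z)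
    (hxy : innerDist S x y ≤ ENNReal.ofReal (A * dist x y))
    (hyz : innerDist S y z ≤ ENNReal.ofReal (A * dist y z)) :
    innerDist S x z ≤ ENNReal.ofReal (A * dist x z) :=
  calc innerDist S x z ≤ innerDist S x y + innerDist S y z := innerDist_triangle S x y z
    _ ≤ ENNReal.ofReal (A * dist x y) + ENNReal.ofReal (A * dist y z) := add_le_add hxy hyz
    _ = ENNReal.ofReal (A * dist x z) := by
        rw [← ENNReal.ofReal_add (by positivity) (by positivity), ← mul_add,
          dist_add_dist_of_mem_segment hy]

lemma innerDist_le_mul_dist_of_segment_subset {A : ℝ} (hA : 1 ≤ A) (h : segment ℝ x y ⊆ S) :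
    innerDist S x y ≤ ENNReal.ofReal (A * dist x y) :=
  (innerDist_le_dist_of_segment_subset h).trans
    (ENNReal.ofReal_le_ofReal (le_mul_of_one_le_left dist_nonneg hA))

variable {u v w : ℝ}

lemma segment_lineMap_eq_image (huv : u ≤ v) :
    segment ℝ (lineMap x y u) (lineMap x y v) = lineMap x y '' Icc u v := by
  rw [← segment_eq_Icc huv, image_segment]

lemma lineMap_mem_segment_lineMap (huv : u ≤ v) (hvw : v ≤ w) :
    lineMap x y v ∈ segment ℝ (lineMap x y u) (lineMap x y w) := by
  rw [segment_lineMap_eq_image (huv.trans hvw)]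
  exact mem_image_of_mem _ ⟨huv, hvw⟩

lemma segment_lineMap_subset (huv : u < v) (hu : lineMap x y u ∈ S) (hv : lineMap x y v ∈ S)
    (h : MapsTo (lineMap x y) (Ioo u v) S) :
    segment ℝ (lineMap x y u) (lineMap x y v) ⊆ S := by
  rw [segment_lineMap_eq_image huv.le, ← Ico_insert_right huv.le, ← Ioo_insert_left huv,
    image_insert_eq, image_insert_eq, insert_subset_iff, insert_subset_iff]
  exact ⟨hv, hu, h.image_subset⟩

lemma innerDist_lineMap_le_of_chain {ι : Type*} {B : ι → Set E} (hBS : ∀ j, B j ⊆ S) {A : ℝ}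
    (hA : 1 ≤ A) (hB : ∀ j, IsLNEWith A (B j)) {p : ℕ} {a b : ℕ → ℝ} {i : ℕ → ι}
    (hab : ∀ k, 1 ≤ k → k ≤ p → a k ≤ b k) (hba : ∀ k, 1 ≤ k → k < p → b k < a (k + 1))
    (hmem : ∀ k, 1 ≤ k → k ≤ p → lineMap x y (a k) ∈ B (i k) ∧ lineMap x y (b k) ∈ B (i k))
    (hgap : ∀ k, 1 ≤ k → k < p → MapsTo (lineMap x y) (Ioo (b k) (a (k + 1))) S) :
    ∀ k, 1 ≤ k → k ≤ p → a 1 ≤ b k ∧ innerDist S (lineMap x y (a 1)) (lineMap x y (b k)) ≤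
      ENNReal.ofReal (A * dist (lineMap x y (a 1)) (lineMap x y (b k))) := by
  have hA₀ : 0 ≤ A := zero_le_one.trans hA
  intro k hk
  induction k, hk using Nat.le_induction with
  | base => exact fun h₁ => ⟨hab 1 le_rfl h₁,
      (hB _).innerDist_le_of_subset (hBS _) (hmem 1 le_rfl h₁).1 (hmem 1 le_rfl h₁).2⟩
  | succ k hk ih =>
    intro hk₁
    obtain ⟨ha₁b, hchain⟩ := ih (by omega)
    have hlt : b k < a (k + 1) := hba k hk (by omega)
    have hab' := hab (k + 1) (by omega) hk₁
    obtain ⟨ha_mem, hb_mem⟩ := hmem (k + 1) (by omega) hk₁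
    have hcross := innerDist_le_mul_dist_of_segment_subset hA (segment_lineMap_subset hlt
      (hBS _ (hmem k hk (by omega)).2) (hBS _ ha_mem) (hgap k hk (by omega)))
    refine ⟨by linarith, innerDist_le_mul_dist_of_mem_segment hA₀
      (lineMap_mem_segment_lineMap (ha₁b.trans hlt.le) hab') ?_
      ((hB _).innerDist_le_of_subset (hBS _) ha_mem hb_mem)⟩
    exact innerDist_le_mul_dist_of_mem_segment hA₀ (lineMap_mem_segment_lineMap ha₁b hlt.le)
      hchain hcross

end Segment

theorem pancake_isLNE_general {n s : ℕ} (E : Set (EuclideanSpace ℝ (Fin n)))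
    (B : Fin s → Set (EuclideanSpace ℝ (Fin n))) (hBE : ∀ i, B i ⊆ E)
    (A : ℝ) (hA : 1 ≤ A) (hB : ∀ i, IsLNEWith A (B i))
    (hdecomp : ∀ x ∈ E, ∀ x' ∈ E, ∃ p : ℕ, 0 < p ∧ ∃ a b : ℕ → ℝ, ∃ i : ℕ → Fin s,
      a 1 = 0 ∧ b p = 1 ∧
      (∀ k, 1 ≤ k → k ≤ p → a k ≤ b k) ∧
      (∀ k, 1 ≤ k → k < p → b k < a (k + 1)) ∧
      (∀ k, 1 ≤ k → k ≤ p →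
        x + a k • (x' - x) ∈ B (i k) ∧ x + b k • (x' - x) ∈ B (i k)) ∧
      (∀ k, 1 ≤ k → k < p → ∀ t ∈ Set.Ioo (b k) (a (k + 1)), x + t • (x' - x) ∈ E) ∧
      (∀ k, 1 ≤ k → k < p → i k ≠ i (k + 1))) :
    ∀ x ∈ E, ∀ x' ∈ E, innerDist E x x' ≤ ENNReal.ofReal (A * ‖x - x'‖) := by
  intro x hx x' hx'
  obtain ⟨p, hp, a, b, i, ha₁, hbp, hab, hba, hmem, hgap, -⟩ := hdecomp x hx x' hx'
  have hline : ∀ t : ℝ, x + t • (x' - x) = lineMap x x' t := fun t => by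
    rw [lineMap_apply_module', add_comm]
  simp only [hline] at hmem hgap
  simpa [ha₁, hbp, dist_eq_norm] using
    (innerDist_lineMap_le_of_chain hBE hA hB hab hba hmem hgap p hp le_rfl).2

/-- the pancake argument: if the boundary components B₁,…,B_s of the closed
connected set E are δ-separated and LNE with common constant A, and every segment between
two points of E decomposes alternately into subsegments with endpoints in a single B_i and
open subsegments inside E, then E is LNE with constant A. -/
theorem pancake_isLNE {n s : ℕ} (E : Set (EuclideanSpace ℝ (Fin n)))
    (hE : IsClosed E) (hEconn : IsConnected E)
    (B : Fin s → Set (EuclideanSpace ℝ (Fin n))) (hBE : ∀ i, B i ⊆ E)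
    (δ : ℝ) (hδ : 0 < δ)
    (hsep : ∀ i j, i ≠ j → ∀ u ∈ B i, ∀ v ∈ B j, δ ≤ ‖u - v‖)
    (A : ℝ) (hA : 1 ≤ A) (hB : ∀ i, IsLNEWith A (B i))
    (hdecomp : ∀ x ∈ E, ∀ x' ∈ E, ∃ p : ℕ, 0 < p ∧ ∃ a b : ℕ → ℝ, ∃ i : ℕ → Fin s,
      a 1 = 0 ∧ b p = 1 ∧
      (∀ k, 1 ≤ k → k ≤ p → a k ≤ b k) ∧
      (∀ k, 1 ≤ k → k < p → b k < a (k + 1)) ∧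
      (∀ k, 1 ≤ k → k ≤ p →
        x + a k • (x' - x) ∈ B (i k) ∧ x + b k • (x' - x) ∈ B (i k)) ∧
      (∀ k, 1 ≤ k → k < p → ∀ t ∈ Set.Ioo (b k) (a (k + 1)), x + t • (x' - x) ∈ E) ∧
      (∀ k, 1 ≤ k → k < p → i k ≠ i (k + 1))) :
    ∀ x ∈ E, ∀ x' ∈ E, innerDist E x x' ≤ ENNReal.ofReal (A * ‖x - x'‖) :=
  pancake_isLNE_general E B hBE A hA hB hdecomp
end
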